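/- Let M ⊆ ℝᴺ be compact, let T₁ < T₂ and k ≥ 0, let v and uₙ (n ∈ ℕ) be continuous vector fields ℝᴺ → ℝᴺ such that uₙ → v uniformly on M, and let φ⁽ⁿ⁾ : [T₁,T₂] → ℝᴺ be admissible paths with derivatives gₙ taking all their values in M and satisfying (1/4)∫_{T₁}^{T₂} ‖gₙ(t) − uₙ(φ⁽ⁿ⁾(t))‖² dt ≤ k for every n. Then the family (φ⁽ⁿ⁾) is uniformly equicontinuous, and there exist a strictly increasing function σ : ℕ → ℕ and an admissible path φ : [T₁,T₂] → ℝᴺ with derivative g, taking all its values in M, such that φ^{(σ(n))} → φ uniformly on [T₁,T₂] and (1/4)∫_{T₁}^{T₂} ‖g(t) − v(φ(t))‖² dt ≤ k. (Compactness of sublevel sets and lower semicontinuity of the Freidlin–Wentzell action under uniform convergence of both paths and drift vector fields.) -/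

import Mathlib

open MeasureTheory Set

/-- A path `φ : [T₁,T₂] → ℝᴺ` is admissible with derivative `g` if `g` is measurable with
square-integrable norm on `[T₁,T₂]` and `φ(t) = φ(T₁) + ∫_{T₁}^t g(s) ds` on `[T₁,T₂]`. -/
def IsAdmissiblePath (N : ℕ) (T₁ T₂ : ℝ)
    (φ g : ℝ → EuclideanSpace ℝ (Fin N)) : Prop :=
  Measurable g ∧
  MeasureTheory.IntegrableOn (fun t => ‖g t‖ ^ 2) (Set.Icc T₁ T₂) ∧
  ∀ t ∈ Set.Icc T₁ T₂, φ t = φ T₁ + ∫ s in T₁..t, g s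

open Filter Topology
open scoped NNReal ENNReal RealInnerProductSpace

/-! The velocities are bounded in `L²(T₁, T₂)`: `‖gₙ‖ ≤ ‖gₙ - uₙ ∘ φₙ‖ + ‖uₙ ∘ φₙ‖ ≤ 2√k + C`
because the drifts are uniformly bounded on `M`. By Cauchy–Schwarz the paths are then uniformly
`1/2`-Hölder, hence uniformly equicontinuous. By sequential Banach–Alaoglu a subsequence of the
velocities converges weakly in `L²` to some `G`, and the starting points converge in `M`; pairing
with indicators of intervals turns this into pointwise, and by equicontinuity uniform, convergence
of the paths to the primitive `ψ` of `G`. Then `uₙ ∘ φₙ → v ∘ ψ` uniformly, hence in `L²`, so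
`gₙ - uₙ ∘ φₙ ⇀ G - v ∘ ψ` weakly, and the action bound passes to the limit because the norm is
weakly lower semicontinuous. -/

section WeakConvergence

variable {H : Type*} [NormedAddCommGroup H] [InnerProductSpace ℝ H]

theorem exists_subseq_forall_inner_tendsto [CompleteSpace H] [TopologicalSpace.SeparableSpace H]
    {x : ℕ → H} {C : ℝ} (hx : ∀ n, ‖x n‖ ≤ C) :
    ∃ σ : ℕ → ℕ, StrictMono σ ∧ ∃ y : H,
      ∀ z, Tendsto (fun n => ⟪x (σ n), z⟫) atTop (𝓝 ⟪y, z⟫) := by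
  obtain ⟨a, -, σ, hσ, hlim⟩ := WeakDual.isSeqCompact_closedBall ℝ H 0 C
    (x := fun n => StrongDual.toWeakDual (InnerProductSpace.toDual ℝ H (x n)))
    (fun n => by simpa using hx n)
  refine ⟨σ, hσ, (InnerProductSpace.toDual ℝ H).symm (WeakDual.toStrongDual a), fun z => ?_⟩
  rw [InnerProductSpace.toDual_symm_apply]
  exact ((WeakDual.eval_continuous z).tendsto a).comp hlim

theorem norm_le_of_forall_inner_tendsto {ι : Type*} {l : Filter ι} [l.NeBot] {x : ι → H}
    {y : H} {C : ℝ} (hxy : ∀ z, Tendsto (fun i => ⟪x i, z⟫) l (𝓝 ⟪y, z⟫))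
    (hx : ∀ᶠ i in l, ‖x i‖ ≤ C) : ‖y‖ ≤ C := by
  have hC : 0 ≤ C := let ⟨i, hi⟩ := hx.exists; (norm_nonneg _).trans hi
  have hyy : ‖y‖ ^ 2 ≤ C * ‖y‖ := by
    rw [← real_inner_self_eq_norm_sq]
    refine le_of_tendsto (hxy y) (hx.mono fun i hi => ?_)
    exact (real_inner_le_norm _ _).trans (mul_le_mul_of_nonneg_right hi (norm_nonneg y))
  nlinarith [norm_nonneg y]

theorem tendsto_of_forall_inner_tendsto [FiniteDimensional ℝ H] {ι : Type*} {l : Filter ι}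
    {x : ι → H} {y : H} (hxy : ∀ z, Tendsto (fun i => ⟪x i, z⟫) l (𝓝 ⟪y, z⟫)) :
    Tendsto x l (𝓝 y) := by
  let b := stdOrthonormalBasis ℝ H
  rw [← b.sum_repr' y, show x = fun i => ∑ j, ⟪b j, x i⟫ • b j from
    funext fun i => (b.sum_repr' _).symm]
  refine tendsto_finsetSum _ fun j _ => Tendsto.smul_const ?_ _
  simpa only [real_inner_comm (b j)] using hxy (b j)

end WeakConvergence

theorem HolderOnWith.of_dist_le {X Y : Type*} [PseudoMetricSpace X] [PseudoMetricSpace Y]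
    {C r : ℝ≥0} {f : X → Y} {s : Set X}
    (h : ∀ x ∈ s, ∀ y ∈ s, dist (f x) (f y) ≤ C * dist x y ^ (r : ℝ)) :
    HolderOnWith C r f s := by
  intro x hx y hy
  rw [edist_dist, edist_dist, ENNReal.ofReal_rpow_of_nonneg dist_nonneg r.coe_nonneg,
    ← ENNReal.ofReal_coe_nnreal, ← ENNReal.ofReal_mul C.coe_nonneg]
  exact ENNReal.ofReal_le_ofReal (h x hx y hy)

theorem HolderOnWith.uniformEquicontinuousOn {ι X Y : Type*} [PseudoEMetricSpace X]
    [PseudoEMetricSpace Y] {f : ι → X → Y} {C r : ℝ≥0} {s : Set X} (hr : 0 < r)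
    (h : ∀ i, HolderOnWith C r (f i) s) : UniformEquicontinuousOn f s := by
  rw [uniformEquicontinuousOn_iff_uniformContinuousOn]
  refine HolderOnWith.uniformContinuousOn (C := C) (fun x hx y hy => ?_) hr
  exact UniformFun.edist_le.2 fun i => (h i).edist_le hx hy

theorem EquicontinuousOn.tendstoUniformlyOn_of_tendsto {ι X α : Type*} [TopologicalSpace X]
    [UniformSpace α] {F : ι → X → α} {f : X → α} {K : Set X} {p : Filter ι}
    (hK : IsCompact K) (hF : EquicontinuousOn F K)
    (h : ∀ x ∈ K, Tendsto (fun i => F i x) p (𝓝 (f x))) : TendstoUniformlyOn F f p K := by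
  have hunif := (EquicontinuousOn.tendsto_uniformOnFun_iff_pi' (𝔖 := {K}) (by simpa)
    (by simpa) p f).2 (by
      rw [sUnion_singleton, tendsto_pi_nhds]
      rintro ⟨x, hx⟩
      exact h x hx)
  exact UniformOnFun.tendsto_iff_tendstoUniformlyOn.1 hunif K rfl

theorem TendstoUniformlyOn.comp_tendstoUniformlyOn {ι α β γ : Type*} [UniformSpace β]
    [PseudoMetricSpace γ] {p : Filter ι} {F : ι → β → γ} {f : β → γ} {M : Set β}
    {G : ι → α → β} {g : α → β} {S : Set α} (hF : TendstoUniformlyOn F f p M)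
    (hf : UniformContinuousOn f M) (hG : TendstoUniformlyOn G g p S)
    (hGM : ∀ i, MapsTo (G i) S M) (hgM : MapsTo g S M) :
    TendstoUniformlyOn (fun i x => F i (G i x)) (fun x => f (g x)) p S := by
  have hfG := hf.comp_tendstoUniformlyOn_eventually (Eventually.of_forall hGM) hgM hG
  refine Metric.tendstoUniformlyOn_iff.2 fun ε hε => ?_
  filter_upwards [Metric.tendstoUniformlyOn_iff.1 hfG (ε / 2) (half_pos hε),
    Metric.tendstoUniformlyOn_iff.1 hF (ε / 2) (half_pos hε)] with i hfGi hFi x hx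
  calc dist (f (g x)) (F i (G i x))
      ≤ dist (f (g x)) (f (G i x)) + dist (f (G i x)) (F i (G i x)) := dist_triangle _ _ _
    _ < ε / 2 + ε / 2 := add_lt_add (hfGi x hx) (hFi _ (hGM i hx))
    _ = ε := add_halves ε

theorem TendstoUniformlyOn.exists_forall_norm_le {X E : Type*} [TopologicalSpace X]
    [SeminormedAddCommGroup E] {u : ℕ → X → E} {v : X → E} {M : Set X} (hM : IsCompact M)
    (hu : ∀ n, ContinuousOn (u n) M) (hv : ContinuousOn v M)
    (huv : TendstoUniformlyOn u v atTop M) : ∃ B, ∀ n, ∀ z ∈ M, ‖u n z‖ ≤ B := by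
  obtain ⟨n₀, hn₀⟩ := eventually_atTop.1 (Metric.tendstoUniformlyOn_iff.1 huv 1 one_pos)
  obtain ⟨Cv, hCv⟩ := hM.exists_bound_of_continuousOn hv
  choose C hC using fun n => hM.exists_bound_of_continuousOn (hu n)
  obtain ⟨C₀, hC₀⟩ := ((Set.finite_Iio n₀).image C).bddAbove
  refine ⟨max C₀ (Cv + 1), fun n z hz => ?_⟩
  rcases lt_or_ge n n₀ with hn | hn
  · exact (hC n z hz).trans ((hC₀ (mem_image_of_mem C hn)).trans (le_max_left _ _))
  · calc ‖u n z‖ ≤ ‖v z‖ + dist (v z) (u n z) := by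
          rw [dist_eq_norm']; exact norm_le_insert' _ _
      _ ≤ Cv + 1 := add_le_add (hCv z hz) (hn₀ n hn z hz).le
      _ ≤ max C₀ (Cv + 1) := le_max_right _ _

theorem Lp.tendsto_of_tendstoUniformlyOn {α E ι : Type*} [MeasurableSpace α] {μ : Measure α}
    [NormedAddCommGroup E] [IsFiniteMeasure μ] {p : ℝ≥0∞} [Fact (1 ≤ p)] {l : Filter ι}
    {F : ι → Lp E p μ} {G : Lp E p μ} {f : ι → α → E} {g : α → E} {s : Set α}
    (hs : ∀ᵐ a ∂μ, a ∈ s) (hF : ∀ i, F i =ᵐ[μ] f i) (hG : G =ᵐ[μ] g)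
    (hfg : TendstoUniformlyOn f g l s) : Tendsto F l (𝓝 G) := by
  set c : ℝ := measureUnivNNReal μ ^ p.toReal⁻¹
  have hc : 0 ≤ c := by positivity
  refine Metric.tendsto_nhds.2 fun ε hε => ?_
  filter_upwards [Metric.tendstoUniformlyOn_iff.1 hfg (ε / (c + 1)) (by positivity)] with i hi
  have hbound : ∀ᵐ a ∂μ, ‖(F i - G) a‖ ≤ ε / (c + 1) := by
    filter_upwards [Lp.coeFn_sub (F i) G, hF i, hG, hs] with a hsub hFa hGa ha
    rw [hsub, Pi.sub_apply, hFa, hGa, ← dist_eq_norm, dist_comm]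
    exact (hi a ha).le
  calc dist (F i) G = ‖F i - G‖ := dist_eq_norm _ _
    _ ≤ c * (ε / (c + 1)) := Lp.norm_le_of_ae_bound (by positivity) hbound
    _ < ε := by rw [mul_div_assoc', div_lt_iff₀ (by positivity)]; nlinarith

section L2

variable {α E : Type*} [MeasurableSpace α] {μ : Measure α}
  [NormedAddCommGroup E] [InnerProductSpace ℝ E]

theorem L2.norm_sub_sq_eq_integral {F G : Lp E 2 μ} {f g : α → E} (hF : F =ᵐ[μ] f)
    (hG : G =ᵐ[μ] g) : ‖F - G‖ ^ 2 = ∫ a, ‖f a - g a‖ ^ 2 ∂μ := by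
  rw [← real_inner_self_eq_norm_sq, L2.inner_def]
  refine integral_congr_ae ?_
  filter_upwards [Lp.coeFn_sub F G, hF, hG] with a hsub hFa hGa
  simp only [hsub, Pi.sub_apply, hFa, hGa, real_inner_self_eq_norm_sq]

theorem L2.norm_sub_le_two_mul_sqrt_iff {F G : Lp E 2 μ} {f g : α → E} (hF : F =ᵐ[μ] f)
    (hG : G =ᵐ[μ] g) {k : ℝ} (hk : 0 ≤ k) :
    ‖F - G‖ ≤ 2 * √k ↔ 1 / 4 * ∫ a, ‖f a - g a‖ ^ 2 ∂μ ≤ k := by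
  rw [← pow_le_pow_iff_left₀ (norm_nonneg _) (by positivity) two_ne_zero, mul_pow,
    Real.sq_sqrt hk, L2.norm_sub_sq_eq_integral hF hG]
  constructor <;> intro h <;> linarith

variable [CompleteSpace E] {s : Set α}

theorem L2.norm_setIntegral_le (F : Lp E 2 μ) (hs : MeasurableSet s) (hμs : μ s ≠ ∞) :
    ‖∫ a in s, F a ∂μ‖ ≤ √(μ.real s) * ‖F‖ := by
  set I := ∫ a in s, F a ∂μ
  have hI : ‖I‖ ^ 2 ≤ ‖I‖ * (√(μ.real s) * ‖F‖) :=
    calc ‖I‖ ^ 2 = ⟪indicatorConstLp 2 hs hμs I, F⟫ := by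
          rw [L2.inner_indicatorConstLp_eq_inner_setIntegral, real_inner_self_eq_norm_sq]
      _ ≤ ‖indicatorConstLp 2 hs hμs I‖ * ‖F‖ := real_inner_le_norm _ _
      _ = ‖I‖ * (√(μ.real s) * ‖F‖) := by
          rw [norm_indicatorConstLp two_ne_zero ENNReal.ofNat_ne_top, Real.sqrt_eq_rpow]
          norm_num [mul_assoc]
  have hc : 0 ≤ √(μ.real s) * ‖F‖ := by positivity
  generalize √(μ.real s) * ‖F‖ = c at hI hc ⊢
  nlinarith [norm_nonneg I]

theorem L2.tendsto_setIntegral_of_forall_inner_tendsto [FiniteDimensional ℝ E] {ι : Type*}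
    {l : Filter ι} {F : ι → Lp E 2 μ} {G : Lp E 2 μ}
    (hFG : ∀ z, Tendsto (fun i => ⟪F i, z⟫) l (𝓝 ⟪G, z⟫)) (hs : MeasurableSet s)
    (hμs : μ s ≠ ∞) : Tendsto (fun i => ∫ a in s, F i a ∂μ) l (𝓝 (∫ a in s, G a ∂μ)) := by
  refine tendsto_of_forall_inner_tendsto fun c => ?_
  have hpair : ∀ H : Lp E 2 μ, ⟪∫ a in s, H a ∂μ, c⟫ = ⟪H, indicatorConstLp 2 hs hμs c⟫ :=
    fun H => by
      rw [real_inner_comm, ← L2.inner_indicatorConstLp_eq_inner_setIntegral, real_inner_comm]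
  simpa only [hpair] using hFG (indicatorConstLp 2 hs hμs c)

end L2

theorem IsCompact.memLp_comp_Icc {E F : Type*} [TopologicalSpace E] [NormedAddCommGroup F]
    {M : Set E} {w : E → F} {f : ℝ → E} {T₁ T₂ : ℝ} {p : ℝ≥0∞} (hM : IsCompact M)
    (hw : ContinuousOn w M) (hf : ContinuousOn f (Icc T₁ T₂)) (hfM : MapsTo f (Icc T₁ T₂) M) :
    MemLp (fun t => w (f t)) p (volume.restrict (Icc T₁ T₂)) := by
  obtain ⟨B, hB⟩ := hM.exists_bound_of_continuousOn hw
  exact .of_bound ((hw.comp hf hfM).aestronglyMeasurable measurableSet_Icc) B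
    (ae_restrict_of_forall_mem measurableSet_Icc fun t ht => hB _ (hfM ht))

section AdmissiblePath

variable {N : ℕ} {T₁ T₂ : ℝ} {φ g : ℝ → EuclideanSpace ℝ (Fin N)}

theorem IsAdmissiblePath.memLp (h : IsAdmissiblePath N T₁ T₂ φ g) :
    MemLp g 2 (volume.restrict (Icc T₁ T₂)) :=
  (memLp_two_iff_integrable_sq_norm h.1.aestronglyMeasurable).2 h.2.1

theorem IsAdmissiblePath.sub_eq_setIntegral (h : IsAdmissiblePath N T₁ T₂ φ g) {s t : ℝ}
    (hs : T₁ ≤ s) (hst : s ≤ t) (ht : t ≤ T₂) :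
    φ t - φ s = ∫ x in Ioc s t, h.memLp.toLp g x ∂(volume.restrict (Icc T₁ T₂)) := by
  have hsub : Ioc s t ⊆ Icc T₁ T₂ :=
    (Ioc_subset_Icc_self : Ioc s t ⊆ Icc s t).trans (Icc_subset_Icc hs ht)
  have hg : IntegrableOn g (Icc T₁ T₂) := h.memLp.integrable one_le_two
  have hint (r : ℝ) (hr : r ∈ Icc T₁ T₂) : IntervalIntegrable g volume T₁ r :=
    (hg.mono_set (uIcc_of_le hr.1 ▸ Icc_subset_Icc le_rfl hr.2)).intervalIntegrable
  have hs' : s ∈ Icc T₁ T₂ := ⟨hs, hst.trans ht⟩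
  have ht' : t ∈ Icc T₁ T₂ := ⟨hs.trans hst, ht⟩
  rw [h.2.2 t ht', h.2.2 s hs', add_sub_add_left_eq_sub,
    intervalIntegral.integral_interval_sub_left (hint t ht') (hint s hs'),
    intervalIntegral.integral_of_le hst, Measure.restrict_restrict measurableSet_Ioc,
    inter_eq_left.2 hsub]
  exact integral_congr_ae
    (EventuallyEq.symm (ae_restrict_of_ae_restrict_of_subset hsub h.memLp.coeFn_toLp))

theorem IsAdmissiblePath.norm_sub_le (h : IsAdmissiblePath N T₁ T₂ φ g) {s t : ℝ}
    (hs : T₁ ≤ s) (hst : s ≤ t) (ht : t ≤ T₂) :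
    ‖φ t - φ s‖ ≤ √(t - s) * ‖h.memLp.toLp g‖ := by
  have hsub : Ioc s t ⊆ Icc T₁ T₂ :=
    (Ioc_subset_Icc_self : Ioc s t ⊆ Icc s t).trans (Icc_subset_Icc hs ht)
  have hvol : (volume.restrict (Icc T₁ T₂)).real (Ioc s t) = t - s := by
    rw [measureReal_restrict_apply measurableSet_Ioc, inter_eq_left.2 hsub,
      Real.volume_real_Ioc_of_le hst]
  rw [h.sub_eq_setIntegral hs hst ht, ← hvol]
  exact L2.norm_setIntegral_le _ measurableSet_Ioc (measure_ne_top _ _)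

theorem IsAdmissiblePath.holderOnWith (h : IsAdmissiblePath N T₁ T₂ φ g) {C : ℝ≥0}
    (hC : ‖h.memLp.toLp g‖ ≤ C) : HolderOnWith C 2⁻¹ φ (Icc T₁ T₂) := by
  refine HolderOnWith.of_dist_le fun s hs t ht => ?_
  wlog hst : s ≤ t generalizing s t
  · rw [dist_comm, dist_comm s]
    exact this t ht s hs (le_of_not_ge hst)
  rw [dist_eq_norm', Real.dist_eq, abs_of_nonpos (sub_nonpos.2 hst), neg_sub, NNReal.coe_inv,
    NNReal.coe_ofNat, ← one_div, ← Real.sqrt_eq_rpow, mul_comm]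
  exact (h.norm_sub_le hs.1 hst ht.2).trans (by gcongr)

theorem IsAdmissiblePath.continuousOn (h : IsAdmissiblePath N T₁ T₂ φ g) :
    ContinuousOn φ (Icc T₁ T₂) :=
  (h.holderOnWith (C := ‖h.memLp.toLp g‖₊) le_rfl).continuousOn (by norm_num)

end AdmissiblePath

section AdmissiblePathFamily

variable {N : ℕ} {T₁ T₂ : ℝ}

theorem exists_isAdmissiblePath_toLp_eq
    (F : Lp (EuclideanSpace ℝ (Fin N)) 2 (volume.restrict (Icc T₁ T₂)))
    (x₀ : EuclideanSpace ℝ (Fin N)) :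
    ∃ ψ G, ∃ h : IsAdmissiblePath N T₁ T₂ ψ G, ψ T₁ = x₀ ∧ h.memLp.toLp G = F := by
  have hF := Lp.aestronglyMeasurable F
  have hadm : IsAdmissiblePath N T₁ T₂ (fun t => x₀ + ∫ s in T₁..t, hF.mk F s) (hF.mk F) :=
    ⟨hF.stronglyMeasurable_mk.measurable,
      (memLp_two_iff_integrable_sq_norm hF.stronglyMeasurable_mk.aestronglyMeasurable).1
        ((Lp.memLp F).ae_eq hF.ae_eq_mk), fun t _ => by simp⟩
  exact ⟨_, _, hadm, by simp, Lp.ext (hadm.memLp.coeFn_toLp.trans hF.ae_eq_mk.symm)⟩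

theorem uniformEquicontinuousOn_of_norm_toLp_le {ι : Type*} {φ g : ι → ℝ → EuclideanSpace ℝ (Fin N)}
    (hadm : ∀ i, IsAdmissiblePath N T₁ T₂ (φ i) (g i)) {C : ℝ≥0}
    (hC : ∀ i, ‖(hadm i).memLp.toLp (g i)‖ ≤ C) : UniformEquicontinuousOn φ (Icc T₁ T₂) :=
  HolderOnWith.uniformEquicontinuousOn (by norm_num) fun i => (hadm i).holderOnWith (hC i)

theorem exists_norm_toLp_le_of_action_le {M : Set (EuclideanSpace ℝ (Fin N))} (hM : IsCompact M)
    {k : ℝ} (hk : 0 ≤ k) {u : ℕ → EuclideanSpace ℝ (Fin N) → EuclideanSpace ℝ (Fin N)}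
    {v : EuclideanSpace ℝ (Fin N) → EuclideanSpace ℝ (Fin N)} (hu : ∀ n, ContinuousOn (u n) M)
    (hv : ContinuousOn v M) (huv : TendstoUniformlyOn u v atTop M)
    {φ g : ℕ → ℝ → EuclideanSpace ℝ (Fin N)} (hadm : ∀ n, IsAdmissiblePath N T₁ T₂ (φ n) (g n))
    (hval : ∀ n, MapsTo (φ n) (Icc T₁ T₂) M)
    (hact : ∀ n, 1 / 4 * ∫ t in Icc T₁ T₂, ‖g n t - u n (φ n t)‖ ^ 2 ≤ k) :
    ∃ C : ℝ≥0, ∀ n, ‖(hadm n).memLp.toLp (g n)‖ ≤ C := by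
  obtain ⟨B, hB⟩ := huv.exists_forall_norm_le hM hu hv
  set c : ℝ := measureUnivNNReal (volume.restrict (Icc T₁ T₂)) ^ (2 : ℝ≥0∞).toReal⁻¹
  refine ⟨(2 * √k + c * |B|).toNNReal, fun n => ?_⟩
  have hdrift := hM.memLp_comp_Icc (p := 2) (hu n) (hadm n).continuousOn (hval n)
  have hY : ‖hdrift.toLp _‖ ≤ c * |B| := Lp.norm_le_of_ae_bound (abs_nonneg B) <| by
    filter_upwards [hdrift.coeFn_toLp, ae_restrict_mem measurableSet_Icc] with t ht htI
    exact ht ▸ (hB n _ (hval n htI)).trans (le_abs_self B)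
  calc _ ≤ ‖(hadm n).memLp.toLp (g n) - hdrift.toLp _‖ + ‖hdrift.toLp _‖ := norm_le_norm_sub_add _ _
    _ ≤ 2 * √k + c * |B| := add_le_add ((L2.norm_sub_le_two_mul_sqrt_iff
        (hadm n).memLp.coeFn_toLp hdrift.coeFn_toLp hk).2 (hact n)) hY
    _ ≤ _ := Real.le_coe_toNNReal _

theorem exists_subseq_tendstoUniformlyOn_of_norm_toLp_le {M : Set (EuclideanSpace ℝ (Fin N))}
    (hM : IsCompact M) {φ g : ℕ → ℝ → EuclideanSpace ℝ (Fin N)}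
    (hadm : ∀ n, IsAdmissiblePath N T₁ T₂ (φ n) (g n)) (hφM : ∀ n, φ n T₁ ∈ M) {C : ℝ≥0}
    (hC : ∀ n, ‖(hadm n).memLp.toLp (g n)‖ ≤ C) :
    ∃ σ : ℕ → ℕ, StrictMono σ ∧ ∃ ψ G, ∃ hψ : IsAdmissiblePath N T₁ T₂ ψ G,
      TendstoUniformlyOn (fun n => φ (σ n)) ψ atTop (Icc T₁ T₂) ∧
      ∀ z, Tendsto (fun n => ⟪(hadm (σ n)).memLp.toLp (g (σ n)), z⟫) atTop
        (𝓝 ⟪hψ.memLp.toLp G, z⟫) := by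
  obtain ⟨ψ₀, -, σ₁, hσ₁, hψ₀⟩ := hM.tendsto_subseq hφM
  have : Fact ((2 : ℝ≥0∞) ≠ ∞) := ⟨ENNReal.ofNat_ne_top⟩
  obtain ⟨σ₂, hσ₂, Γ, hweak⟩ := exists_subseq_forall_inner_tendsto fun n => hC (σ₁ n)
  obtain ⟨ψ, G, hψ, hψT₁, hΓ⟩ := exists_isAdmissiblePath_toLp_eq Γ ψ₀
  refine ⟨σ₁ ∘ σ₂, hσ₁.comp hσ₂, ψ, G, hψ, ?_, hΓ ▸ hweak⟩
  refine (uniformEquicontinuousOn_of_norm_toLp_le (fun n => hadm _) fun n => hC _)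
    |>.equicontinuousOn.tendstoUniformlyOn_of_tendsto isCompact_Icc fun t ht => ?_
  rw [(sub_eq_iff_eq_add').1 (hψ.sub_eq_setIntegral le_rfl ht.1 ht.2), hψT₁, hΓ]
  refine ((hψ₀.comp hσ₂.tendsto_atTop).add (L2.tendsto_setIntegral_of_forall_inner_tendsto
    hweak measurableSet_Ioc (measure_ne_top _ _))).congr fun n => ?_
  exact ((sub_eq_iff_eq_add').1 ((hadm _).sub_eq_setIntegral le_rfl ht.1 ht.2)).symm

theorem action_le_of_tendstoUniformlyOn {M : Set (EuclideanSpace ℝ (Fin N))} (hM : IsCompact M)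
    {k : ℝ} (hk : 0 ≤ k) {u : ℕ → EuclideanSpace ℝ (Fin N) → EuclideanSpace ℝ (Fin N)}
    {v : EuclideanSpace ℝ (Fin N) → EuclideanSpace ℝ (Fin N)} (hu : ∀ n, ContinuousOn (u n) M)
    (hv : ContinuousOn v M) (huv : TendstoUniformlyOn u v atTop M)
    {φ g : ℕ → ℝ → EuclideanSpace ℝ (Fin N)} {ψ G : ℝ → EuclideanSpace ℝ (Fin N)}
    (hadm : ∀ n, IsAdmissiblePath N T₁ T₂ (φ n) (g n)) (hψ : IsAdmissiblePath N T₁ T₂ ψ G)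
    (hval : ∀ n, MapsTo (φ n) (Icc T₁ T₂) M) (hψM : MapsTo ψ (Icc T₁ T₂) M)
    (hunif : TendstoUniformlyOn φ ψ atTop (Icc T₁ T₂))
    (hweak : ∀ z, Tendsto (fun n => ⟪(hadm n).memLp.toLp (g n), z⟫) atTop
      (𝓝 ⟪hψ.memLp.toLp G, z⟫))
    (hact : ∀ n, 1 / 4 * ∫ t in Icc T₁ T₂, ‖g n t - u n (φ n t)‖ ^ 2 ≤ k) :
    1 / 4 * ∫ t in Icc T₁ T₂, ‖G t - v (ψ t)‖ ^ 2 ≤ k := by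
  have hdrift (n : ℕ) := hM.memLp_comp_Icc (p := 2) (hu n) (hadm n).continuousOn (hval n)
  have hlim := hM.memLp_comp_Icc (p := 2) hv hψ.continuousOn hψM
  have hYW : Tendsto (fun n => (hdrift n).toLp _) atTop (𝓝 (hlim.toLp _)) :=
    Lp.tendsto_of_tendstoUniformlyOn (ae_restrict_mem measurableSet_Icc)
      (fun n => (hdrift n).coeFn_toLp) hlim.coeFn_toLp
      (huv.comp_tendstoUniformlyOn (hM.uniformContinuousOn_of_continuous hv) hunif hval hψM)
  rw [← L2.norm_sub_le_two_mul_sqrt_iff hψ.memLp.coeFn_toLp hlim.coeFn_toLp hk]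
  refine norm_le_of_forall_inner_tendsto (l := atTop) (fun z => ?_) (Eventually.of_forall
    fun n => (L2.norm_sub_le_two_mul_sqrt_iff (hadm n).memLp.coeFn_toLp
      (hdrift n).coeFn_toLp hk).2 (hact n))
  simp only [inner_sub_left]
  exact (hweak z).sub (hYW.inner tendsto_const_nhds)

end AdmissiblePathFamily

theorem action_lower_semicontinuous_compactness_general (N : ℕ)
    (M : Set (EuclideanSpace ℝ (Fin N))) (hM : IsCompact M)
    (T₁ T₂ : ℝ) (hT : T₁ < T₂) (k : ℝ) (hk : 0 ≤ k)
    (v : EuclideanSpace ℝ (Fin N) → EuclideanSpace ℝ (Fin N)) (hv : Continuous v)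
    (u : ℕ → EuclideanSpace ℝ (Fin N) → EuclideanSpace ℝ (Fin N))
    (hu : ∀ n, Continuous (u n))
    (huv : TendstoUniformlyOn u v Filter.atTop M)
    (φ g : ℕ → ℝ → EuclideanSpace ℝ (Fin N))
    (hadm : ∀ n, IsAdmissiblePath N T₁ T₂ (φ n) (g n))
    (hval : ∀ n, ∀ t ∈ Set.Icc T₁ T₂, φ n t ∈ M)
    (hact : ∀ n,
      (1 / 4) * (∫ t in Set.Icc T₁ T₂, ‖g n t - u n (φ n t)‖ ^ 2) ≤ k) :
    UniformEquicontinuousOn φ (Set.Icc T₁ T₂) ∧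
    ∃ σ : ℕ → ℕ, StrictMono σ ∧
      ∃ ψ G : ℝ → EuclideanSpace ℝ (Fin N),
        IsAdmissiblePath N T₁ T₂ ψ G ∧
        (∀ t ∈ Set.Icc T₁ T₂, ψ t ∈ M) ∧
        TendstoUniformlyOn (fun n => φ (σ n)) ψ Filter.atTop (Set.Icc T₁ T₂) ∧
        (1 / 4) * (∫ t in Set.Icc T₁ T₂, ‖G t - v (ψ t)‖ ^ 2) ≤ k := by
  have hu' (n : ℕ) := (hu n).continuousOn (s := M)
  obtain ⟨C, hC⟩ :=
    exists_norm_toLp_le_of_action_le hM hk hu' hv.continuousOn huv hadm hval hact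
  refine ⟨uniformEquicontinuousOn_of_norm_toLp_le hadm hC, ?_⟩
  obtain ⟨σ, hσ, ψ, G, hψ, hunif, hweak⟩ := exists_subseq_tendstoUniformlyOn_of_norm_toLp_le hM
    hadm (fun n => hval n T₁ (left_mem_Icc.2 hT.le)) hC
  have hψM : MapsTo ψ (Icc T₁ T₂) M := fun t ht =>
    hM.isClosed.mem_of_tendsto (hunif.tendsto_at ht) (.of_forall fun n => hval (σ n) t ht)
  refine ⟨σ, hσ, ψ, G, hψ, hψM, hunif, ?_⟩
  exact action_le_of_tendstoUniformlyOn hM hk (fun n => hu' (σ n)) hv.continuousOn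
    (fun U hU => hσ.tendsto_atTop.eventually (huv U hU)) (fun n => hadm (σ n)) hψ
    (fun n => hval (σ n)) hψM hunif hweak fun n => hact (σ n)

/-- Compactness of sublevel sets and lower semicontinuity of the
Freidlin–Wentzell action under uniform convergence of both paths and drift vector fields:
a sequence of paths with values in a compact set `M` and uniformly bounded actions (for
drifts `uₙ → v` uniformly on `M`) is uniformly equicontinuous, and a subsequence converges
uniformly to an admissible path with values in `M` whose `v`-action is at most `k`. -/
theorem action_lower_semicontinuous_compactness (N : ℕ) (hN : 1 ≤ N)
    (M : Set (EuclideanSpace ℝ (Fin N))) (hM : IsCompact M)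
    (T₁ T₂ : ℝ) (hT : T₁ < T₂) (k : ℝ) (hk : 0 ≤ k)
    (v : EuclideanSpace ℝ (Fin N) → EuclideanSpace ℝ (Fin N)) (hv : Continuous v)
    (u : ℕ → EuclideanSpace ℝ (Fin N) → EuclideanSpace ℝ (Fin N))
    (hu : ∀ n, Continuous (u n))
    (huv : TendstoUniformlyOn u v Filter.atTop M)
    (φ g : ℕ → ℝ → EuclideanSpace ℝ (Fin N))
    (hadm : ∀ n, IsAdmissiblePath N T₁ T₂ (φ n) (g n))
    (hval : ∀ n, ∀ t ∈ Set.Icc T₁ T₂, φ n t ∈ M)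
    (hact : ∀ n,
      (1 / 4) * (∫ t in Set.Icc T₁ T₂, ‖g n t - u n (φ n t)‖ ^ 2) ≤ k) :
    UniformEquicontinuousOn φ (Set.Icc T₁ T₂) ∧
    ∃ σ : ℕ → ℕ, StrictMono σ ∧
      ∃ ψ G : ℝ → EuclideanSpace ℝ (Fin N),
        IsAdmissiblePath N T₁ T₂ ψ G ∧
        (∀ t ∈ Set.Icc T₁ T₂, ψ t ∈ M) ∧
        TendstoUniformlyOn (fun n => φ (σ n)) ψ Filter.atTop (Set.Icc T₁ T₂) ∧
        (1 / 4) * (∫ t in Set.Icc T₁ T₂, ‖G t - v (ψ t)‖ ^ 2) ≤ k :=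
  action_lower_semicontinuous_compactness_general N M hM T₁ T₂ hT k hk v hv u hu huv φ g hadm hval
    hact
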